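/- Let p be a nonzero Laurent polynomial in two variables over ℤ whose y-breadth ℓ satisfies ℓ ≥ 1. Let j₀ = min{j : ∃ i, coeff p (i, j) ≠ 0} (so that j₀ + ℓ is the corresponding maximum), and let a_{j₀} and a_{j₀+ℓ} be the nonzero one-variable Laurent polynomials with coefficients coeff p (·, j₀) and coeff p (·, j₀+ℓ) respectively. Let ω ≥ 1 be an integer and set C = maxdeg(a_{j₀}) − mindeg(a_{j₀+ℓ}). Then there exists N such that for every integer n ≥ N the specialization p(t, t^{−nω}) is a nonzero one-variable Laurent polynomial whose breadth equals n·ω·ℓ + C. In particular, br(p(t, t^{−nω})) → ∞ as n → ∞. (This is the breadth computation used in the proofs of Theorem 2.1(3) and Proposition 1.9 of the paper.) -/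

import Mathlib

/-- The maximum `y`-exponent appearing in a two-variable Laurent polynomial
(junk value `0` for the zero polynomial). -/
noncomputable def ymax (p : AddMonoidAlgebra ℤ (ℤ × ℤ)) : ℤ :=
  WithBot.unbotD 0 ((p.coeff.support.image Prod.snd).max)

/-- The minimum `y`-exponent appearing in a two-variable Laurent polynomial
(junk value `0` for the zero polynomial). -/
noncomputable def ymin (p : AddMonoidAlgebra ℤ (ℤ × ℤ)) : ℤ :=
  WithTop.untopD 0 ((p.coeff.support.image Prod.snd).min)

/-- The `y`-breadth of a two-variable Laurent polynomial. -/
noncomputable def ybreadth (p : AddMonoidAlgebra ℤ (ℤ × ℤ)) : ℤ := ymax p - ymin p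

/-- The maximum degree of a one-variable Laurent polynomial (junk value `0` for `0`). -/
noncomputable def maxdeg (q : AddMonoidAlgebra ℤ ℤ) : ℤ := WithBot.unbotD 0 (q.coeff.support.max)

/-- The minimum degree of a one-variable Laurent polynomial (junk value `0` for `0`). -/
noncomputable def mindeg (q : AddMonoidAlgebra ℤ ℤ) : ℤ := WithTop.untopD 0 (q.coeff.support.min)

/-- The breadth of a one-variable Laurent polynomial:
maximum degree minus minimum degree of its support. -/
noncomputable def breadth (q : AddMonoidAlgebra ℤ ℤ) : ℤ := maxdeg q - mindeg q

/-- The coefficient `a_j(x)` of `y^j` in a two-variable Laurent polynomial `p(x,y)`: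
the one-variable Laurent polynomial whose coefficient of `x^i` is `coeff p (i, j)`. -/
noncomputable def row (p : AddMonoidAlgebra ℤ (ℤ × ℤ)) (j : ℤ) : AddMonoidAlgebra ℤ ℤ :=
  AddMonoidAlgebra.ofCoeff (Finsupp.mapDomain Prod.fst (p.coeff.filter (fun ij => ij.2 = j)))

/-- For `c : ℤ`, the specialization `p(t, t^c)`: the image of `p` under the map sending
the monomial `x^i y^j` to `t^{i + c·j}`. -/
noncomputable def specPow (c : ℤ) (p : AddMonoidAlgebra ℤ (ℤ × ℤ)) : AddMonoidAlgebra ℤ ℤ :=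
  AddMonoidAlgebra.ofCoeff (Finsupp.mapDomain (fun ij => ij.1 + c * ij.2) p.coeff)

/-! If `-c` exceeds the spread of the `x`-exponents of `p`, the weight `i + c j` of a monomial
`x^i y^j` strictly decreases from each row `j` to every higher one. Hence `(i, j) ↦ i + c j` is
injective on the support, nothing cancels in `p(t, t^c)`, its top degree comes from the largest
`x`-exponent in the lowest row and its bottom degree from the smallest `x`-exponent in the highest
row: `br p(t, t^c) = maxdeg a_{j₀} - mindeg a_{j₀+ℓ} - c ℓ`. For `c = -nω` this holds once
`nω` exceeds that spread. -/

open Finset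

section Degrees

variable {q : AddMonoidAlgebra ℤ ℤ} {m : ℤ}

lemma maxdeg_eq_of_isGreatest (h : IsGreatest (q.coeff.support : Set ℤ) m) : maxdeg q = m := by
  have hne : q.coeff.support.Nonempty := ⟨m, h.1⟩
  rw [maxdeg, ← coe_max' hne, WithBot.unbotD_coe]
  exact (isGreatest_max' _ hne).unique h

lemma mindeg_eq_of_isLeast (h : IsLeast (q.coeff.support : Set ℤ) m) : mindeg q = m := by
  have hne : q.coeff.support.Nonempty := ⟨m, h.1⟩
  rw [mindeg, ← coe_min' hne, WithTop.untopD_coe]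
  exact (isLeast_min' _ hne).unique h

lemma isGreatest_maxdeg (hq : q ≠ 0) : IsGreatest (q.coeff.support : Set ℤ) (maxdeg q) := by
  have hne : q.coeff.support.Nonempty := by simpa using hq
  rw [maxdeg_eq_of_isGreatest (isGreatest_max' _ hne)]
  exact isGreatest_max' _ hne

lemma isLeast_mindeg (hq : q ≠ 0) : IsLeast (q.coeff.support : Set ℤ) (mindeg q) := by
  have hne : q.coeff.support.Nonempty := by simpa using hq
  rw [mindeg_eq_of_isLeast (isLeast_min' _ hne)]
  exact isLeast_min' _ hne

end Degrees

section TwoVariables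

variable {p : AddMonoidAlgebra ℤ (ℤ × ℤ)}

lemma isLeast_ymin (hp : p ≠ 0) :
    IsLeast (p.coeff.support.image Prod.snd : Set ℤ) (ymin p) := by
  have hne : (p.coeff.support.image Prod.snd).Nonempty := by simpa using hp
  rw [ymin, ← coe_min' hne, WithTop.untopD_coe]
  exact isLeast_min' _ hne

lemma isGreatest_ymax (hp : p ≠ 0) :
    IsGreatest (p.coeff.support.image Prod.snd : Set ℤ) (ymax p) := by
  have hne : (p.coeff.support.image Prod.snd).Nonempty := by simpa using hp
  rw [ymax, ← coe_max' hne, WithBot.unbotD_coe]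
  exact isGreatest_max' _ hne

lemma ymin_le {ij : ℤ × ℤ} (h : ij ∈ p.coeff.support) : ymin p ≤ ij.2 :=
  (isLeast_ymin (by rintro rfl; simp at h)).2 (mem_image_of_mem Prod.snd h)

lemma le_ymax {ij : ℤ × ℤ} (h : ij ∈ p.coeff.support) : ij.2 ≤ ymax p :=
  (isGreatest_ymax (by rintro rfl; simp at h)).2 (mem_image_of_mem Prod.snd h)

lemma coeff_row (j i : ℤ) : (row p j).coeff i = p.coeff (i, j) := by
  have hsub :
      ((p.coeff.filter fun ij => ij.2 = j).support : Set (ℤ × ℤ)) ⊆ {ij | ij.2 = j} :=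
    fun _ h => (Finset.mem_filter.mp h).2
  have hinj : Set.InjOn Prod.fst {ij : ℤ × ℤ | ij.2 = j} :=
    fun a ha b hb hab => Prod.ext hab (ha.trans hb.symm)
  rw [row, AddMonoidAlgebra.coeff_ofCoeff]
  exact (Finsupp.mapDomain_apply' _ _ hsub hinj (a := (i, j)) rfl).trans
    (Finsupp.filter_apply_pos _ _ rfl)

lemma coe_support_row (j : ℤ) :
    ((row p j).coeff.support : Set ℤ) = {i | (i, j) ∈ p.coeff.support} := by
  ext i
  simp [coeff_row]

lemma row_ne_zero {i j : ℤ} (h : (i, j) ∈ p.coeff.support) : row p j ≠ 0 := by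
  intro hrow
  apply Finsupp.mem_support_iff.mp h
  rw [← coeff_row, hrow]
  rfl

lemma isGreatest_maxdeg_row {i j : ℤ} (h : (i, j) ∈ p.coeff.support) :
    IsGreatest {i | (i, j) ∈ p.coeff.support} (maxdeg (row p j)) :=
  coe_support_row (p := p) j ▸ isGreatest_maxdeg (row_ne_zero h)

lemma isLeast_mindeg_row {i j : ℤ} (h : (i, j) ∈ p.coeff.support) :
    IsLeast {i | (i, j) ∈ p.coeff.support} (mindeg (row p j)) :=
  coe_support_row (p := p) j ▸ isLeast_mindeg (row_ne_zero h)

end TwoVariables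

def XSpreadLt (p : AddMonoidAlgebra ℤ (ℤ × ℤ)) (B : ℤ) : Prop :=
  ∀ a ∈ p.coeff.support, ∀ b ∈ p.coeff.support, b.1 - a.1 < B

lemma exists_xSpreadLt (p : AddMonoidAlgebra ℤ (ℤ × ℤ)) : ∃ B, XSpreadLt p B := by
  obtain ⟨M, hM⟩ := (p.coeff.support.image Prod.fst).bddAbove
  obtain ⟨m, hm⟩ := (p.coeff.support.image Prod.fst).bddBelow
  refine ⟨M - m + 1, fun a ha b hb => ?_⟩
  have hb' := hM (mem_image_of_mem Prod.fst hb)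
  have ha' := hm (mem_image_of_mem Prod.fst ha)
  linarith

lemma XSpreadLt.mono {p : AddMonoidAlgebra ℤ (ℤ × ℤ)} {B B' : ℤ} (h : XSpreadLt p B)
    (hB : B ≤ B') : XSpreadLt p B' :=
  fun a ha b hb => (h a ha b hb).trans_le hB

section Specialization

variable {p : AddMonoidAlgebra ℤ (ℤ × ℤ)} {c : ℤ}

lemma XSpreadLt.add_mul_lt_of_snd_lt (hc : XSpreadLt p (-c)) {a b : ℤ × ℤ}
    (ha : a ∈ p.coeff.support) (hb : b ∈ p.coeff.support) (h : a.2 < b.2) :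
    b.1 + c * b.2 < a.1 + c * a.2 := by
  have hc0 : 0 < -c := by simpa using hc a ha a ha
  nlinarith [hc a ha b hb]

lemma XSpreadLt.support_specPow (hc : XSpreadLt p (-c)) :
    (specPow c p).coeff.support = p.coeff.support.image fun ij => ij.1 + c * ij.2 := by
  refine Finsupp.mapDomain_support_of_injOn _ fun a ha b hb hab => ?_
  rcases lt_trichotomy a.2 b.2 with h | h | h
  · exact absurd hab (hc.add_mul_lt_of_snd_lt ha hb h).ne'
  · exact Prod.ext (by simp_all) h
  · exact absurd hab (hc.add_mul_lt_of_snd_lt hb ha h).ne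

lemma XSpreadLt.isGreatest_support_specPow (hc : XSpreadLt p (-c)) (hp : p ≠ 0) :
    IsGreatest ((specPow c p).coeff.support : Set ℤ)
      (maxdeg (row p (ymin p)) + c * ymin p) := by
  obtain ⟨⟨i₀, j₀⟩, h₀, hj₀ : j₀ = ymin p⟩ := mem_image.mp (isLeast_ymin hp).1
  have hrow := isGreatest_maxdeg_row h₀
  rw [← hj₀, hc.support_specPow, coe_image]
  refine ⟨⟨(maxdeg (row p j₀), j₀), hrow.1, rfl⟩, ?_⟩
  rintro _ ⟨⟨i, j⟩, h, rfl⟩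
  rcases (hj₀ ▸ ymin_le h : j₀ ≤ j).eq_or_lt with hj | hj
  · subst hj
    simpa using hrow.2 h
  · exact (hc.add_mul_lt_of_snd_lt hrow.1 h hj).le

lemma XSpreadLt.isLeast_support_specPow (hc : XSpreadLt p (-c)) (hp : p ≠ 0) :
    IsLeast ((specPow c p).coeff.support : Set ℤ) (mindeg (row p (ymax p)) + c * ymax p) := by
  obtain ⟨⟨i₁, j₁⟩, h₁, hj₁ : j₁ = ymax p⟩ := mem_image.mp (isGreatest_ymax hp).1
  have hrow := isLeast_mindeg_row h₁
  rw [← hj₁, hc.support_specPow, coe_image]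
  refine ⟨⟨(mindeg (row p j₁), j₁), hrow.1, rfl⟩, ?_⟩
  rintro _ ⟨⟨i, j⟩, h, rfl⟩
  rcases (hj₁ ▸ le_ymax h : j ≤ j₁).eq_or_lt with hj | hj
  · subst hj
    simpa using hrow.2 h
  · exact (hc.add_mul_lt_of_snd_lt h hrow.1 hj).le

lemma XSpreadLt.breadth_specPow (hc : XSpreadLt p (-c)) (hp : p ≠ 0) :
    specPow c p ≠ 0 ∧ breadth (specPow c p) =
      maxdeg (row p (ymin p)) - mindeg (row p (ymax p)) - c * ybreadth p := by
  have hmax := hc.isGreatest_support_specPow hp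
  refine ⟨fun h => by simpa [h] using hmax.1, ?_⟩
  rw [breadth, maxdeg_eq_of_isGreatest hmax, mindeg_eq_of_isLeast (hc.isLeast_support_specPow hp),
    ybreadth]
  ring

end Specialization

/-- The breadth computation used in the proofs of Theorem 2.1(3) and Proposition 1.9:
if `p` is a nonzero two-variable Laurent polynomial with `y`-breadth `ℓ ≥ 1`,
`j₀` is the minimal `y`-exponent of `p`, `ω ≥ 1`, and
`C = maxdeg(a_{j₀}) − mindeg(a_{j₀+ℓ})`, then for all sufficiently large `n` the
specialization `p(t, t^{−nω})` is nonzero with breadth exactly `n·ω·ℓ + C`; in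
particular the breadth of `p(t, t^{−nω})` tends to infinity as `n → ∞`. -/
theorem breadth_specPow_eventually_linear (p : AddMonoidAlgebra ℤ (ℤ × ℤ)) (hp : p ≠ 0)
    (hℓ : 1 ≤ ybreadth p) (ω : ℤ) (hω : 1 ≤ ω) :
    (∃ N : ℤ, ∀ n : ℤ, N ≤ n →
        specPow (-(n * ω)) p ≠ 0 ∧
        breadth (specPow (-(n * ω)) p) =
          n * ω * ybreadth p +
            (maxdeg (row p (ymin p)) - mindeg (row p (ymin p + ybreadth p)))) ∧
    Filter.Tendsto (fun n : ℤ => breadth (specPow (-(n * ω)) p))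
      Filter.atTop Filter.atTop := by
  rw [show ymin p + ybreadth p = ymax p by rw [ybreadth]; ring]
  set C := maxdeg (row p (ymin p)) - mindeg (row p (ymax p))
  obtain ⟨B, hB⟩ := exists_xSpreadLt p
  have hnω : ∀ n, max B 1 ≤ n → n ≤ n * ω := fun n hn => le_mul_of_one_le_right (by omega) hω
  have hlin : ∀ n, max B 1 ≤ n →
      specPow (-(n * ω)) p ≠ 0 ∧
        breadth (specPow (-(n * ω)) p) = n * ω * ybreadth p + C := by
    intro n hn
    have hc : XSpreadLt p (-(-(n * ω))) := hB.mono (by linarith [hnω n hn, le_max_left B 1])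
    refine (hc.breadth_specPow hp).imp_right fun hbr => ?_
    rw [hbr]
    ring
  refine ⟨⟨_, hlin⟩, ?_⟩
  refine Filter.tendsto_atTop_mono' _ ?_
    (Filter.tendsto_atTop_add_const_right _ C Filter.tendsto_id)
  filter_upwards [Filter.eventually_ge_atTop (max B 1)] with n hn
  have hn' := hnω n hn
  have hnωℓ : n * ω ≤ n * ω * ybreadth p := le_mul_of_one_le_right (by omega) hℓ
  rw [(hlin n hn).2, id]
  linarith
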